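/- Fix ε₁ ∈ ℝ. For a smooth function τ : ℝ → ℝ, define the vector field X(τ) : ℝ⁶ → ℝ⁶, in coordinates z = (t, x, y, u, v, w), by X(τ)(z) = (τ(t), τ'(t)x/2, τ'(t)y/2, −τ'(t)u/2 − ((x² + ε₁y²)/8)τ''(t)·v, −τ'(t)v/2 + ((x² + ε₁y²)/8)τ''(t)·u, −τ'(t)w/2 − (τ'''(t)/8)(x²y + ε₁y³/3)). Then for all smooth τ₁, τ₂ : ℝ → ℝ and all z ∈ ℝ⁶, the Lie bracket [X(τ₁), X(τ₂)](z) := D(X(τ₂))(z)·(X(τ₁)(z)) − D(X(τ₁))(z)·(X(τ₂)(z)) equals X(τ₁τ₂' − τ₁'τ₂)(z). (This is the Virasoro-type commutation relation of the symmetry algebra of the Davey–Stewartson system.) -/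

import Mathlib

/-- The time-reparametrization symmetry generator `𝒳(τ)` of the Davey--Stewartson system,
as a vector field on `ℝ⁶` with coordinates `z = (t, x, y, u, v, w)`. -/
noncomputable def dsX (ε₁ : ℝ) (τ : ℝ → ℝ) : (Fin 6 → ℝ) → (Fin 6 → ℝ) :=
  fun z =>
    ![τ (z 0),
      deriv τ (z 0) * z 1 / 2,
      deriv τ (z 0) * z 2 / 2,
      -(deriv τ (z 0)) * z 3 / 2
        - ((z 1) ^ 2 + ε₁ * (z 2) ^ 2) / 8 * deriv (deriv τ) (z 0) * z 4,
      -(deriv τ (z 0)) * z 4 / 2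
        + ((z 1) ^ 2 + ε₁ * (z 2) ^ 2) / 8 * deriv (deriv τ) (z 0) * z 3,
      -(deriv τ (z 0)) * z 5 / 2
        - deriv (deriv (deriv τ)) (z 0) / 8 * ((z 1) ^ 2 * z 2 + ε₁ * (z 2) ^ 3 / 3)]

open ContinuousLinearMap in
lemma dsX_fderiv_apply (ε₁ : ℝ) {τ : ℝ → ℝ} (hτ : ContDiff ℝ (⊤ : ℕ∞) τ) (z v : Fin 6 → ℝ) :
    fderiv ℝ (dsX ε₁ τ) z v = ![
      deriv τ (z 0) * v 0,
      (deriv (deriv τ) (z 0) * v 0 * z 1 + deriv τ (z 0) * v 1) / 2,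
      (deriv (deriv τ) (z 0) * v 0 * z 2 + deriv τ (z 0) * v 2) / 2,
      -(deriv (deriv τ) (z 0) * v 0 * z 3 + deriv τ (z 0) * v 3) / 2
        - (2 * z 1 * v 1 + ε₁ * (2 * z 2 * v 2)) / 8 * deriv (deriv τ) (z 0) * z 4
        - (z 1 ^ 2 + ε₁ * z 2 ^ 2) / 8 * (deriv (deriv (deriv τ)) (z 0) * v 0) * z 4
        - (z 1 ^ 2 + ε₁ * z 2 ^ 2) / 8 * deriv (deriv τ) (z 0) * v 4,
      -(deriv (deriv τ) (z 0) * v 0 * z 4 + deriv τ (z 0) * v 4) / 2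
        + (2 * z 1 * v 1 + ε₁ * (2 * z 2 * v 2)) / 8 * deriv (deriv τ) (z 0) * z 3
        + (z 1 ^ 2 + ε₁ * z 2 ^ 2) / 8 * (deriv (deriv (deriv τ)) (z 0) * v 0) * z 3
        + (z 1 ^ 2 + ε₁ * z 2 ^ 2) / 8 * deriv (deriv τ) (z 0) * v 3,
      -(deriv (deriv τ) (z 0) * v 0 * z 5 + deriv τ (z 0) * v 5) / 2
        - deriv (deriv (deriv (deriv τ))) (z 0) * v 0 / 8 * (z 1 ^ 2 * z 2 + ε₁ * z 2 ^ 3 / 3)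
        - deriv (deriv (deriv τ)) (z 0) / 8
            * (2 * z 1 * v 1 * z 2 + z 1 ^ 2 * v 2 + ε₁ * (z 2 ^ 2 * v 2))] := by
  have hc0 : ContDiff ℝ ((⊤:ℕ∞) : WithTop ℕ∞) τ := hτ.of_le (by simp)
  have hc1 : ContDiff ℝ ((⊤:ℕ∞) : WithTop ℕ∞) (deriv τ) := (contDiff_infty_iff_deriv.mp hc0).2
  have hc2 : ContDiff ℝ ((⊤:ℕ∞) : WithTop ℕ∞) (deriv (deriv τ)) := (contDiff_infty_iff_deriv.mp hc1).2
  have hc3 : ContDiff ℝ ((⊤:ℕ∞) : WithTop ℕ∞) (deriv (deriv (deriv τ))) := (contDiff_infty_iff_deriv.mp hc2).2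
  have hd : ∀ g : ℝ → ℝ, ContDiff ℝ ((⊤:ℕ∞) : WithTop ℕ∞) g → Differentiable ℝ g :=
    fun g hg => hg.differentiable (by simp)
  have hp : ∀ i : Fin 6, HasFDerivAt (fun w : Fin 6 → ℝ => w i)
      (proj i : (Fin 6 → ℝ) →L[ℝ] ℝ) z := fun i => hasFDerivAt_apply i z
  have ht0 : HasFDerivAt (fun w : Fin 6 → ℝ => τ (w 0))
      (deriv τ (z 0) • (proj 0 : (Fin 6 → ℝ) →L[ℝ] ℝ)) z :=
    HasDerivAt.comp_hasFDerivAt z ((hd _ hc0 (z 0)).hasDerivAt) (hp 0)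
  have ht1 : HasFDerivAt (fun w : Fin 6 → ℝ => deriv τ (w 0))
      (deriv (deriv τ) (z 0) • (proj 0 : (Fin 6 → ℝ) →L[ℝ] ℝ)) z :=
    by have := HasDerivAt.comp_hasFDerivAt z ((hd _ hc1 (z 0)).hasDerivAt) (hp 0); exact this
  have ht2 : HasFDerivAt (fun w : Fin 6 → ℝ => deriv (deriv τ) (w 0))
      (deriv (deriv (deriv τ)) (z 0) • (proj 0 : (Fin 6 → ℝ) →L[ℝ] ℝ)) z :=
    by have := HasDerivAt.comp_hasFDerivAt z ((hd _ hc2 (z 0)).hasDerivAt) (hp 0); exact this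
  have ht3 : HasFDerivAt (fun w : Fin 6 → ℝ => deriv (deriv (deriv τ)) (w 0))
      (deriv (deriv (deriv (deriv τ))) (z 0) • (proj 0 : (Fin 6 → ℝ) →L[ℝ] ℝ)) z :=
    by have := HasDerivAt.comp_hasFDerivAt z ((hd _ hc3 (z 0)).hasDerivAt) (hp 0); exact this
  have h0 := ht0
  have h1 := (ht1.mul (hp 1)).mul_const (2:ℝ)⁻¹
  have h2 := (ht1.mul (hp 2)).mul_const (2:ℝ)⁻¹
  have h3 := (((ht1.mul (hp 3)).neg.mul_const (2:ℝ)⁻¹).sub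
    (((((hp 1).mul (hp 1)).add (((hp 2).mul (hp 2)).const_mul ε₁)).mul_const
      (8:ℝ)⁻¹).mul ht2 |>.mul (hp 4)))
  have h4 := (((ht1.mul (hp 4)).neg.mul_const (2:ℝ)⁻¹).add
    (((((hp 1).mul (hp 1)).add (((hp 2).mul (hp 2)).const_mul ε₁)).mul_const
      (8:ℝ)⁻¹).mul ht2 |>.mul (hp 3)))
  have h5 := (((ht1.mul (hp 5)).neg.mul_const (2:ℝ)⁻¹).sub
    ((ht3.mul_const (8:ℝ)⁻¹).mul
      ((((hp 1).mul (hp 1)).mul (hp 2)).add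
        (((((hp 2).mul (hp 2)).mul (hp 2)).const_mul ε₁).mul_const (3:ℝ)⁻¹))))
  have e1 : (fun x : Fin 6 → ℝ => deriv τ (x 0) * x 1 / 2)
      = fun y : Fin 6 → ℝ => deriv τ (y 0) * y 1 * 2⁻¹ := by
    funext w; ring
  have e2 : (fun x : Fin 6 → ℝ => deriv τ (x 0) * x 2 / 2)
      = fun y : Fin 6 → ℝ => deriv τ (y 0) * y 2 * 2⁻¹ := by
    funext w; ring
  have e3 : (fun x : Fin 6 → ℝ => -(deriv τ (x 0)) * x 3 / 2
        - (x 1 ^ 2 + ε₁ * x 2 ^ 2) / 8 * deriv (deriv τ) (x 0) * x 4)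
      = fun x : Fin 6 → ℝ => -(deriv τ (x 0) * x 3) * 2⁻¹
        - (x 1 * x 1 + ε₁ * (x 2 * x 2)) * 8⁻¹ * deriv (deriv τ) (x 0) * x 4 := by
    funext w; ring
  have e4 : (fun x : Fin 6 → ℝ => -(deriv τ (x 0)) * x 4 / 2
        + (x 1 ^ 2 + ε₁ * x 2 ^ 2) / 8 * deriv (deriv τ) (x 0) * x 3)
      = fun x : Fin 6 → ℝ => -(deriv τ (x 0) * x 4) * 2⁻¹
        + (x 1 * x 1 + ε₁ * (x 2 * x 2)) * 8⁻¹ * deriv (deriv τ) (x 0) * x 3 := by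
    funext w; ring
  have e5 : (fun x : Fin 6 → ℝ => -(deriv τ (x 0)) * x 5 / 2
        - deriv (deriv (deriv τ)) (x 0) / 8 * (x 1 ^ 2 * x 2 + ε₁ * x 2 ^ 3 / 3))
      = fun x : Fin 6 → ℝ => -(deriv τ (x 0) * x 5) * 2⁻¹
        - deriv (deriv (deriv τ)) (x 0) * 8⁻¹
          * (x 1 * x 1 * x 2 + ε₁ * (x 2 * x 2 * x 2) * 3⁻¹) := by
    funext w; ring
  have hdiff : ∀ i : Fin 6, DifferentiableAt ℝ (fun x => dsX ε₁ τ x i) z := by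
    intro i
    fin_cases i
    · exact h0.differentiableAt
    · show DifferentiableAt ℝ (fun x : Fin 6 → ℝ => deriv τ (x 0) * x 1 / 2) z
      rw [e1]; exact h1.differentiableAt
    · show DifferentiableAt ℝ (fun x : Fin 6 → ℝ => deriv τ (x 0) * x 2 / 2) z
      rw [e2]; exact h2.differentiableAt
    · show DifferentiableAt ℝ (fun x : Fin 6 → ℝ => -(deriv τ (x 0)) * x 3 / 2
        - (x 1 ^ 2 + ε₁ * x 2 ^ 2) / 8 * deriv (deriv τ) (x 0) * x 4) z
      rw [e3]; exact h3.differentiableAt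
    · show DifferentiableAt ℝ (fun x : Fin 6 → ℝ => -(deriv τ (x 0)) * x 4 / 2
        + (x 1 ^ 2 + ε₁ * x 2 ^ 2) / 8 * deriv (deriv τ) (x 0) * x 3) z
      rw [e4]; exact h4.differentiableAt
    · show DifferentiableAt ℝ (fun x : Fin 6 → ℝ => -(deriv τ (x 0)) * x 5 / 2
        - deriv (deriv (deriv τ)) (x 0) / 8 * (x 1 ^ 2 * x 2 + ε₁ * x 2 ^ 3 / 3)) z
      rw [e5]; exact h5.differentiableAt
  rw [(fderiv_pi hdiff : fderiv ℝ (dsX ε₁ τ) z = _)]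
  funext i
  fin_cases i
  · show fderiv ℝ (fun w : Fin 6 → ℝ => τ (w 0)) z v = deriv τ (z 0) * v 0
    rw [h0.fderiv]; simp
  · show fderiv ℝ (fun x : Fin 6 → ℝ => deriv τ (x 0) * x 1 / 2) z v
        = (deriv (deriv τ) (z 0) * v 0 * z 1 + deriv τ (z 0) * v 1) / 2
    rw [e1]; erw [h1.fderiv]
    simp only [ContinuousLinearMap.add_apply, ContinuousLinearMap.sub_apply,
      ContinuousLinearMap.neg_apply, ContinuousLinearMap.smul_apply,
      ContinuousLinearMap.proj_apply, smul_eq_mul]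
    ring
  · show fderiv ℝ (fun x : Fin 6 → ℝ => deriv τ (x 0) * x 2 / 2) z v
        = (deriv (deriv τ) (z 0) * v 0 * z 2 + deriv τ (z 0) * v 2) / 2
    rw [e2]; erw [h2.fderiv]
    simp only [ContinuousLinearMap.add_apply, ContinuousLinearMap.sub_apply,
      ContinuousLinearMap.neg_apply, ContinuousLinearMap.smul_apply,
      ContinuousLinearMap.proj_apply, smul_eq_mul]
    ring
  · show fderiv ℝ (fun x : Fin 6 → ℝ => -(deriv τ (x 0)) * x 3 / 2
        - (x 1 ^ 2 + ε₁ * x 2 ^ 2) / 8 * deriv (deriv τ) (x 0) * x 4) z v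
        = -(deriv (deriv τ) (z 0) * v 0 * z 3 + deriv τ (z 0) * v 3) / 2
        - (2 * z 1 * v 1 + ε₁ * (2 * z 2 * v 2)) / 8 * deriv (deriv τ) (z 0) * z 4
        - (z 1 ^ 2 + ε₁ * z 2 ^ 2) / 8 * (deriv (deriv (deriv τ)) (z 0) * v 0) * z 4
        - (z 1 ^ 2 + ε₁ * z 2 ^ 2) / 8 * deriv (deriv τ) (z 0) * v 4
    rw [e3]; erw [h3.fderiv]
    simp only [Pi.mul_apply, Pi.add_apply, Pi.sub_apply, Pi.neg_apply]
    simp only [ContinuousLinearMap.add_apply, ContinuousLinearMap.sub_apply,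
      ContinuousLinearMap.neg_apply, ContinuousLinearMap.smul_apply,
      ContinuousLinearMap.proj_apply, smul_eq_mul]
    ring
  · show fderiv ℝ (fun x : Fin 6 → ℝ => -(deriv τ (x 0)) * x 4 / 2
        + (x 1 ^ 2 + ε₁ * x 2 ^ 2) / 8 * deriv (deriv τ) (x 0) * x 3) z v
        = -(deriv (deriv τ) (z 0) * v 0 * z 4 + deriv τ (z 0) * v 4) / 2
        + (2 * z 1 * v 1 + ε₁ * (2 * z 2 * v 2)) / 8 * deriv (deriv τ) (z 0) * z 3
        + (z 1 ^ 2 + ε₁ * z 2 ^ 2) / 8 * (deriv (deriv (deriv τ)) (z 0) * v 0) * z 3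
        + (z 1 ^ 2 + ε₁ * z 2 ^ 2) / 8 * deriv (deriv τ) (z 0) * v 3
    rw [e4]; erw [h4.fderiv]
    simp only [Pi.mul_apply, Pi.add_apply, Pi.sub_apply, Pi.neg_apply]
    simp only [ContinuousLinearMap.add_apply, ContinuousLinearMap.sub_apply,
      ContinuousLinearMap.neg_apply, ContinuousLinearMap.smul_apply,
      ContinuousLinearMap.proj_apply, smul_eq_mul]
    ring
  · show fderiv ℝ (fun x : Fin 6 → ℝ => -(deriv τ (x 0)) * x 5 / 2
        - deriv (deriv (deriv τ)) (x 0) / 8 * (x 1 ^ 2 * x 2 + ε₁ * x 2 ^ 3 / 3)) z v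
        = -(deriv (deriv τ) (z 0) * v 0 * z 5 + deriv τ (z 0) * v 5) / 2
        - deriv (deriv (deriv (deriv τ))) (z 0) * v 0 / 8 * (z 1 ^ 2 * z 2 + ε₁ * z 2 ^ 3 / 3)
        - deriv (deriv (deriv τ)) (z 0) / 8
            * (2 * z 1 * v 1 * z 2 + z 1 ^ 2 * v 2 + ε₁ * (z 2 ^ 2 * v 2))
    rw [e5]; erw [h5.fderiv]
    simp only [Pi.mul_apply, Pi.add_apply, Pi.sub_apply, Pi.neg_apply]
    simp only [ContinuousLinearMap.add_apply, ContinuousLinearMap.sub_apply,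
      ContinuousLinearMap.neg_apply, ContinuousLinearMap.smul_apply,
      ContinuousLinearMap.proj_apply, smul_eq_mul]
    ring

/-- the Virasoro-type commutation relation
`[𝒳(τ₁), 𝒳(τ₂)] = 𝒳(τ₁τ̇₂ − τ̇₁τ₂)` of the symmetry algebra of the
Davey--Stewartson system. -/
theorem ds_virasoro_commutation (ε₁ : ℝ) (τ₁ τ₂ : ℝ → ℝ)
    (hτ₁ : ContDiff ℝ (⊤ : ℕ∞) τ₁) (hτ₂ : ContDiff ℝ (⊤ : ℕ∞) τ₂) (z : Fin 6 → ℝ) :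
    fderiv ℝ (dsX ε₁ τ₂) z (dsX ε₁ τ₁ z) - fderiv ℝ (dsX ε₁ τ₁) z (dsX ε₁ τ₂ z)
      = dsX ε₁ (fun t => τ₁ t * deriv τ₂ t - deriv τ₁ t * τ₂ t) z := by
  have hA0 : ContDiff ℝ ((⊤:ℕ∞) : WithTop ℕ∞) τ₁ := hτ₁.of_le (by simp)
  have hA1 : ContDiff ℝ ((⊤:ℕ∞) : WithTop ℕ∞) (deriv τ₁) := (contDiff_infty_iff_deriv.mp hA0).2
  have hA2 : ContDiff ℝ ((⊤:ℕ∞) : WithTop ℕ∞) (deriv (deriv τ₁)) := (contDiff_infty_iff_deriv.mp hA1).2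
  have hA3 : ContDiff ℝ ((⊤:ℕ∞) : WithTop ℕ∞) (deriv (deriv (deriv τ₁))) := (contDiff_infty_iff_deriv.mp hA2).2
  have hB0 : ContDiff ℝ ((⊤:ℕ∞) : WithTop ℕ∞) τ₂ := hτ₂.of_le (by simp)
  have hB1 : ContDiff ℝ ((⊤:ℕ∞) : WithTop ℕ∞) (deriv τ₂) := (contDiff_infty_iff_deriv.mp hB0).2
  have hB2 : ContDiff ℝ ((⊤:ℕ∞) : WithTop ℕ∞) (deriv (deriv τ₂)) := (contDiff_infty_iff_deriv.mp hB1).2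
  have hB3 : ContDiff ℝ ((⊤:ℕ∞) : WithTop ℕ∞) (deriv (deriv (deriv τ₂))) := (contDiff_infty_iff_deriv.mp hB2).2
  have hd : ∀ g : ℝ → ℝ, ContDiff ℝ ((⊤:ℕ∞) : WithTop ℕ∞) g → Differentiable ℝ g :=
    fun g hg => hg.differentiable (by simp)
  have dA0 := hd _ hA0
  have dA1 := hd _ hA1
  have dA2 := hd _ hA2
  have dA3 := hd _ hA3
  have dB0 := hd _ hB0
  have dB1 := hd _ hB1
  have dB2 := hd _ hB2
  have dB3 := hd _ hB3
  have l1 : deriv (fun t => τ₁ t * deriv τ₂ t - deriv τ₁ t * τ₂ t)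
      = fun t => τ₁ t * deriv (deriv τ₂) t - deriv (deriv τ₁) t * τ₂ t := by
    funext s
    simp only [deriv_fun_sub ((dA0 s).fun_mul (dB1 s)) ((dA1 s).fun_mul (dB0 s)),
      deriv_fun_mul (dA0 s) (dB1 s), deriv_fun_mul (dA1 s) (dB0 s)]
    try ring
  have l2 : deriv (fun t => τ₁ t * deriv (deriv τ₂) t - deriv (deriv τ₁) t * τ₂ t)
      = fun t => deriv τ₁ t * deriv (deriv τ₂) t + τ₁ t * deriv (deriv (deriv τ₂)) t
          - (deriv (deriv (deriv τ₁)) t * τ₂ t + deriv (deriv τ₁) t * deriv τ₂ t) := by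
    funext s
    simp only [deriv_fun_sub ((dA0 s).fun_mul (dB2 s)) ((dA2 s).fun_mul (dB0 s)),
      deriv_fun_mul (dA0 s) (dB2 s), deriv_fun_mul (dA2 s) (dB0 s)]
  have l3 : deriv (fun t => deriv τ₁ t * deriv (deriv τ₂) t + τ₁ t * deriv (deriv (deriv τ₂)) t
          - (deriv (deriv (deriv τ₁)) t * τ₂ t + deriv (deriv τ₁) t * deriv τ₂ t))
      = fun t => deriv (deriv τ₁) t * deriv (deriv τ₂) t
          + 2 * (deriv τ₁ t * deriv (deriv (deriv τ₂)) t)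
          + τ₁ t * deriv (deriv (deriv (deriv τ₂))) t
          - (deriv (deriv (deriv (deriv τ₁))) t * τ₂ t
            + 2 * (deriv (deriv (deriv τ₁)) t * deriv τ₂ t)
            + deriv (deriv τ₁) t * deriv (deriv τ₂) t) := by
    funext s
    simp only [deriv_fun_sub (((dA1 s).fun_mul (dB2 s)).fun_add ((dA0 s).fun_mul (dB3 s)))
        (((dA3 s).fun_mul (dB0 s)).fun_add ((dA2 s).fun_mul (dB1 s))),
      deriv_fun_add ((dA1 s).fun_mul (dB2 s)) ((dA0 s).fun_mul (dB3 s)),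
      deriv_fun_add ((dA3 s).fun_mul (dB0 s)) ((dA2 s).fun_mul (dB1 s)),
      deriv_fun_mul (dA1 s) (dB2 s), deriv_fun_mul (dA0 s) (dB3 s),
      deriv_fun_mul (dA3 s) (dB0 s), deriv_fun_mul (dA2 s) (dB1 s)]
    try ring
  rw [dsX_fderiv_apply ε₁ hτ₂ z (dsX ε₁ τ₁ z), dsX_fderiv_apply ε₁ hτ₁ z (dsX ε₁ τ₂ z)]
  funext i
  fin_cases i
  · show ((deriv τ₂ (z 0)) * (τ₁ (z 0))) - ((deriv τ₁ (z 0)) * (τ₂ (z 0)))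
        = τ₁ (z 0) * deriv τ₂ (z 0) - deriv τ₁ (z 0) * τ₂ (z 0)
    ring
  · show (((deriv (deriv τ₂) (z 0)) * (τ₁ (z 0)) * z 1 + (deriv τ₂ (z 0)) * ((deriv τ₁ (z 0)) * z 1 / 2)) / 2) - (((deriv (deriv τ₁) (z 0)) * (τ₂ (z 0)) * z 1 + (deriv τ₁ (z 0)) * ((deriv τ₂ (z 0)) * z 1 / 2)) / 2)
        = (deriv ((fun t => τ₁ t * deriv τ₂ t - deriv τ₁ t * τ₂ t)) (z 0)) * z 1 / 2
    simp only [l1, l2, l3]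
    ring
  · show (((deriv (deriv τ₂) (z 0)) * (τ₁ (z 0)) * z 2 + (deriv τ₂ (z 0)) * ((deriv τ₁ (z 0)) * z 2 / 2)) / 2) - (((deriv (deriv τ₁) (z 0)) * (τ₂ (z 0)) * z 2 + (deriv τ₁ (z 0)) * ((deriv τ₂ (z 0)) * z 2 / 2)) / 2)
        = (deriv ((fun t => τ₁ t * deriv τ₂ t - deriv τ₁ t * τ₂ t)) (z 0)) * z 2 / 2
    simp only [l1, l2, l3]
    ring
  · show (-((deriv (deriv τ₂) (z 0)) * (τ₁ (z 0)) * z 3 + (deriv τ₂ (z 0)) * (-(deriv τ₁ (z 0)) * z 3 / 2 - (z 1 ^ 2 + ε₁ * z 2 ^ 2) / 8 * (deriv (deriv τ₁) (z 0)) * z 4)) / 2 - (2 * z 1 * ((deriv τ₁ (z 0)) * z 1 / 2) + ε₁ * (2 * z 2 * ((deriv τ₁ (z 0)) * z 2 / 2))) / 8 * (deriv (deriv τ₂) (z 0)) * z 4 - (z 1 ^ 2 + ε₁ * z 2 ^ 2) / 8 * ((deriv (deriv (deriv τ₂)) (z 0)) * (τ₁ (z 0))) * z 4 - (z 1 ^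 2 + ε₁ * z 2 ^ 2) / 8 * (deriv (deriv τ₂) (z 0)) * (-(deriv τ₁ (z 0)) * z 4 / 2 + (z 1 ^ 2 + ε₁ * z 2 ^ 2) / 8 * (deriv (deriv τ₁) (z 0)) * z 3)) - (-((deriv (deriv τ₁) (z 0)) * (τ₂ (z 0)) * z 3 + (deriv τ₁ (z 0)) * (-(deriv τ₂ (z 0)) * z 3 / 2 - (z 1 ^ 2 + ε₁ * z 2 ^ 2) / 8 * (deriv (deriv τ₂) (z 0)) * z 4)) / 2 - (2 * z 1 * ((deriv τ₂ (z 0)) * z 1 / 2) + ε₁ * (2 * z 2 * ((deriv τ₂ (z 0)) * z 2 / 2))) / 8 * (deriv (deriv τ₁) (z 0)) * z 4 - (z 1 ^ 2 + ε₁ * z 2 ^ 2) / 8 * ((deriv (deriv (deriv τ₁)) (z 0)) * (τ₂ (z 0))) * z 4 - (z 1 ^ 2 + ε₁ * z 2 ^ 2) / 8 * (deriv (deriv τ₁) (z 0)) * (-(deriv τ₂ (z 0)) * z 4 / 2 + (z 1 ^ 2 + ε₁ * z 2 ^ 2) / 8 * (deriv (deriv τ₂) (z 0)) * z 3))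
        = -(deriv ((fun t => τ₁ t * deriv τ₂ t - deriv τ₁ t * τ₂ t)) (z 0)) * z 3 / 2 - (z 1 ^ 2 + ε₁ * z 2 ^ 2) / 8 * (deriv (deriv ((fun t => τ₁ t * deriv τ₂ t - deriv τ₁ t * τ₂ t))) (z 0)) * z 4
    simp only [l1, l2, l3]
    ring
  · show (-((deriv (deriv τ₂) (z 0)) * (τ₁ (z 0)) * z 4 + (deriv τ₂ (z 0)) * (-(deriv τ₁ (z 0)) * z 4 / 2 + (z 1 ^ 2 + ε₁ * z 2 ^ 2) / 8 * (deriv (deriv τ₁) (z 0)) * z 3)) / 2 + (2 * z 1 * ((deriv τ₁ (z 0)) * z 1 / 2) + ε₁ * (2 * z 2 * ((deriv τ₁ (z 0)) * z 2 / 2))) / 8 * (deriv (deriv τ₂) (z 0)) * z 3 + (z 1 ^ 2 + ε₁ * z 2 ^ 2) / 8 * ((deriv (deriv (deriv τ₂)) (z 0)) * (τ₁ (z 0))) * z 3 + (z 1 ^ 2 + ε₁ * z 2 ^ 2) / 8 * (deriv (deriv τ₂) (z 0)) * (-(deriv τ₁ (z 0)) * z 3 / 2 - (z 1 ^ 2 +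 ε₁ * z 2 ^ 2) / 8 * (deriv (deriv τ₁) (z 0)) * z 4)) - (-((deriv (deriv τ₁) (z 0)) * (τ₂ (z 0)) * z 4 + (deriv τ₁ (z 0)) * (-(deriv τ₂ (z 0)) * z 4 / 2 + (z 1 ^ 2 + ε₁ * z 2 ^ 2) / 8 * (deriv (deriv τ₂) (z 0)) * z 3)) / 2 + (2 * z 1 * ((deriv τ₂ (z 0)) * z 1 / 2) + ε₁ * (2 * z 2 * ((deriv τ₂ (z 0)) * z 2 / 2))) / 8 * (deriv (deriv τ₁) (z 0)) * z 3 + (z 1 ^ 2 + ε₁ * z 2 ^ 2) / 8 * ((deriv (deriv (deriv τ₁)) (z 0)) * (τ₂ (z 0))) * z 3 + (z 1 ^ 2 + ε₁ * z 2 ^ 2) / 8 * (deriv (deriv τ₁) (z 0)) * (-(deriv τ₂ (z 0)) * z 3 / 2 - (z 1 ^ 2 + ε₁ * z 2 ^ 2) / 8 * (deriv (deriv τ₂) (z 0)) * z 4))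
        = -(deriv ((fun t => τ₁ t * deriv τ₂ t - deriv τ₁ t * τ₂ t)) (z 0)) * z 4 / 2 + (z 1 ^ 2 + ε₁ * z 2 ^ 2) / 8 * (deriv (deriv ((fun t => τ₁ t * deriv τ₂ t - deriv τ₁ t * τ₂ t))) (z 0)) * z 3
    simp only [l1, l2, l3]
    ring
  · show (-((deriv (deriv τ₂) (z 0)) * (τ₁ (z 0)) * z 5 + (deriv τ₂ (z 0)) * (-(deriv τ₁ (z 0)) * z 5 / 2 - (deriv (deriv (deriv τ₁)) (z 0)) / 8 * (z 1 ^ 2 * z 2 + ε₁ * z 2 ^ 3 / 3))) / 2 - (deriv (deriv (deriv (deriv τ₂))) (z 0)) * (τ₁ (z 0)) / 8 * (z 1 ^ 2 * z 2 + ε₁ * z 2 ^ 3 / 3) - (deriv (deriv (deriv τ₂)) (z 0)) / 8 * (2 * z 1 * ((deriv τ₁ (z 0)) * z 1 / 2) * z 2 + z 1 ^ 2 * ((deriv τ₁ (z 0)) * z 2 / 2) + ε₁ * (z 2 ^ 2 * ((deriv τ₁ (z 0)) * z 2 / 2)))) - (-((deriv (deriv τ₁) (z 0)) * (τ₂ (z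 0)) * z 5 + (deriv τ₁ (z 0)) * (-(deriv τ₂ (z 0)) * z 5 / 2 - (deriv (deriv (deriv τ₂)) (z 0)) / 8 * (z 1 ^ 2 * z 2 + ε₁ * z 2 ^ 3 / 3))) / 2 - (deriv (deriv (deriv (deriv τ₁))) (z 0)) * (τ₂ (z 0)) / 8 * (z 1 ^ 2 * z 2 + ε₁ * z 2 ^ 3 / 3) - (deriv (deriv (deriv τ₁)) (z 0)) / 8 * (2 * z 1 * ((deriv τ₂ (z 0)) * z 1 / 2) * z 2 + z 1 ^ 2 * ((deriv τ₂ (z 0)) * z 2 / 2) + ε₁ * (z 2 ^ 2 * ((deriv τ₂ (z 0)) * z 2 / 2))))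
        = -(deriv ((fun t => τ₁ t * deriv τ₂ t - deriv τ₁ t * τ₂ t)) (z 0)) * z 5 / 2 - (deriv (deriv (deriv ((fun t => τ₁ t * deriv τ₂ t - deriv τ₁ t * τ₂ t)))) (z 0)) / 8 * (z 1 ^ 2 * z 2 + ε₁ * z 2 ^ 3 / 3)
    simp only [l1, l2, l3]
    ring
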